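/- arXiv:2310.13464 — 6 statements merged into one kernel-verified Lean document; each statement's English description precedes it below -/
import Mathlib

section
/- Let K be a proper cone in a finite dimensional real inner product space V. A linear map L on V is a Z-transformation on K if and only if exp(−tL) maps K into K for every t ≥ 0. -/
open scoped RealInnerProductSpace

variable {V : Type*}

/-- A proper cone: closed, convex, closed under nonnegative scaling, pointed,
with nonempty interior. -/
def IsProperCone [NormedAddCommGroup V] [InnerProductSpace ℝ V] (K : Set V) : Prop :=
  IsClosed K ∧ Convex ℝ K ∧ (∀ x ∈ K, ∀ t : ℝ, 0 ≤ t → t • x ∈ K) ∧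
    (∀ x, x ∈ K → -x ∈ K → x = 0) ∧ (interior K).Nonempty

/-- A Z-transformation relative to a proper cone `K` with dual cone `K*`:
`x ∈ K`, `y ∈ K*`, `⟪x,y⟫ = 0` imply `⟪L x, y⟫ ≤ 0`. -/
def IsZTransfDual [NormedAddCommGroup V] [InnerProductSpace ℝ V]
    (K : Set V) (L : V → V) : Prop :=
  ∀ x ∈ K, ∀ y ∈ {y : V | ∀ z ∈ K, 0 ≤ ⟪z, y⟫}, ⟪x, y⟫ = 0 → ⟪L x, y⟫ ≤ 0

/-! If `L` is a Z-transformation, let `φ t` be the squared distance from `u t = exp (-tL) x` to `K`.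
Comparing with the distance to the nearest point `p` of `K` at time `t`: the vector `p - u t` lies
in `K*` and is orthogonal to `p`, so the Z-property makes the `L p` term nonpositive and
`D⁺φ ≤ 2 ‖L‖ φ`; as `φ 0 = 0`, Gronwall gives `φ ≡ 0`. Conversely, `t ↦ ⟪exp (-tL) x, y⟫` is
nonnegative on `t ≥ 0` and vanishes at `0`, so its derivative `-⟪L x, y⟫` there is nonnegative. -/

open Metric Set Filter Topology NormedSpace

theorem HasDerivWithinAt.nonneg_of_nonneg_Ioi {f : ℝ → ℝ} {a d : ℝ}
    (hf : HasDerivWithinAt f d (Ioi a) a) (hfa : f a = 0) (hpos : ∀ t > a, 0 ≤ f t) :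
    0 ≤ d := by
  rw [hasDerivWithinAt_iff_tendsto_slope' self_notMem_Ioi] at hf
  refine ge_of_tendsto hf (eventually_mem_nhdsWithin.mono fun t (ht : a < t) => ?_)
  rw [slope_def_field, hfa, sub_zero]
  exact div_nonneg (hpos t ht) (sub_pos.2 ht).le

theorem frequently_slope_lt_of_le_of_hasDerivAt {φ ψ : ℝ → ℝ} {s d r : ℝ}
    (hle : ∀ z, φ z ≤ ψ z) (heq : φ s = ψ s) (hψ : HasDerivAt ψ d s) (hr : d < r) :
    ∃ᶠ z in 𝓝[>] s, (z - s)⁻¹ * (φ z - φ s) < r := by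
  have hslope := hψ.hasDerivWithinAt (s := Ioi s)
  rw [hasDerivWithinAt_iff_tendsto_slope' self_notMem_Ioi] at hslope
  refine ((hslope.eventually_lt_const hr).and self_mem_nhdsWithin).frequently.mono ?_
  rintro z ⟨hz, hsz : s < z⟩
  rw [slope_def_field, div_eq_inv_mul] at hz
  calc (z - s)⁻¹ * (φ z - φ s) ≤ (z - s)⁻¹ * (ψ z - ψ s) :=
        mul_le_mul_of_nonneg_left (by linarith [hle z]) (inv_pos.2 (sub_pos.2 hsz)).le
    _ < r := hz

section

variable [NormedAddCommGroup V] [InnerProductSpace ℝ V] {K : Set V}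

theorem hasDerivAt_exp_neg_smul_apply [CompleteSpace V] (L : V →L[ℝ] V) (x : V) (t : ℝ) :
    HasDerivAt (fun s : ℝ => exp (-(s • L)) x) (-L (exp (-(t • L)) x)) t := by
  simpa using
    (hasDerivAt_exp_smul_const' (𝕂 := ℝ) (-L) t).clm_apply (hasDerivAt_const t x)

theorem exists_nearest_mem_of_convex_cone [CompleteSpace V] (hcl : IsClosed K)
    (hconv : Convex ℝ K) (hcone : ∀ x ∈ K, ∀ t : ℝ, 0 ≤ t → t • x ∈ K) (hne : K.Nonempty)
    (z : V) :
    ∃ p ∈ K, infDist z K = ‖p - z‖ ∧ (∀ w ∈ K, 0 ≤ ⟪w, p - z⟫) ∧ ⟪p, p - z⟫ = 0 := by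
  obtain ⟨p, hp, hmin⟩ := exists_norm_eq_iInf_of_complete_convex hne hcl.isComplete hconv z
  have hvar := (norm_eq_iInf_iff_real_inner_le_zero hconv hp).1 hmin
  have hzp : ⟪z - p, p⟫ = 0 := le_antisymm
    (by simpa [two_smul] using hvar _ (hcone p hp 2 zero_le_two))
    (by simpa using hvar 0 (by simpa using hcone p hp 0 le_rfl))
  have hflip (w : V) : ⟪w, p - z⟫ = -⟪z - p, w⟫ := by
    rw [← neg_sub z p, inner_neg_right, real_inner_comm]
  refine ⟨p, hp, ?_, fun w hw => ?_, by rw [hflip, hzp, neg_zero]⟩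
  · rw [infDist_eq_iInf, norm_sub_rev, hmin]
    simp_rw [dist_eq_norm]
  · have hw := hvar w hw
    rw [inner_sub_right, hzp, sub_zero] at hw
    rw [hflip]
    linarith

variable {L : V →L[ℝ] V}

theorem IsZTransfDual.inner_apply_sub_le (hZ : IsZTransfDual K ⇑L) {p y : V} (hp : p ∈ K)
    (hy : ∀ w ∈ K, 0 ≤ ⟪w, y⟫) (hpy : ⟪p, y⟫ = 0) : ⟪L (p - y), y⟫ ≤ ‖L‖ * ‖y‖ ^ 2 := by
  have hLp : ⟪L p, y⟫ ≤ 0 := hZ p hp y hy hpy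
  have hLy : -⟪L y, y⟫ ≤ ‖L‖ * ‖y‖ ^ 2 := calc
    -⟪L y, y⟫ ≤ ‖L y‖ * ‖y‖ := (neg_le_abs _).trans (abs_real_inner_le_norm _ _)
    _ ≤ ‖L‖ * ‖y‖ * ‖y‖ := by gcongr; exact L.le_opNorm y
    _ = ‖L‖ * ‖y‖ ^ 2 := by ring
  rw [map_sub, inner_sub_left]
  linarith

theorem IsZTransfDual.frequently_slope_infDist_sq_lt [CompleteSpace V] (hZ : IsZTransfDual K ⇑L)
    (hcl : IsClosed K) (hconv : Convex ℝ K) (hcone : ∀ x ∈ K, ∀ t : ℝ, 0 ≤ t → t • x ∈ K)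
    (hne : K.Nonempty) {u : ℝ → V} {s r : ℝ} (hu : HasDerivAt u (-L (u s)) s)
    (hr : 2 * ‖L‖ * infDist (u s) K ^ 2 < r) :
    ∃ᶠ z in 𝓝[>] s, (z - s)⁻¹ * (infDist (u z) K ^ 2 - infDist (u s) K ^ 2) < r := by
  obtain ⟨p, hp, hdist, hdual, horth⟩ :=
    exists_nearest_mem_of_convex_cone hcl hconv hcone hne (u s)
  refine frequently_slope_lt_of_le_of_hasDerivAt (ψ := fun z => ‖u z - p‖ ^ 2) (fun z => ?_)
    (by rw [hdist, norm_sub_rev]) (hu.sub_const p).norm_sq (lt_of_le_of_lt ?_ hr)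
  · have hle := infDist_le_dist_of_mem (x := u z) hp
    rw [dist_eq_norm] at hle
    exact pow_le_pow_left₀ infDist_nonneg hle 2
  · have hZp := hZ.inner_apply_sub_le hp hdual horth
    rw [sub_sub_cancel] at hZp
    rw [hdist, ← neg_sub p (u s), inner_neg_neg, real_inner_comm]
    linarith

theorem IsZTransfDual.exp_neg_smul_apply_mem [CompleteSpace V] (hZ : IsZTransfDual K ⇑L)
    (hcl : IsClosed K) (hconv : Convex ℝ K) (hcone : ∀ x ∈ K, ∀ t : ℝ, 0 ≤ t → t • x ∈ K)
    (hne : K.Nonempty) {t : ℝ} (ht : 0 ≤ t) {x : V} (hx : x ∈ K) :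
    exp (-(t • L)) x ∈ K := by
  set u : ℝ → V := fun s => exp (-(s • L)) x
  have hu (s : ℝ) : HasDerivAt u (-L (u s)) s := hasDerivAt_exp_neg_smul_apply L x s
  have hcont : Continuous fun s => infDist (u s) K ^ 2 :=
    ((continuous_infDist_pt K).comp
      (continuous_iff_continuousAt.2 fun s => (hu s).continuousAt)).pow 2
  have hu0 : infDist (u 0) K ^ 2 ≤ 0 := by simp [u, infDist_zero_of_mem hx]
  have hgronwall := le_gronwallBound_of_liminf_deriv_right_le hcont.continuousOn
    (fun s _ r hr => hZ.frequently_slope_infDist_sq_lt hcl hconv hcone hne (hu s) hr) hu0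
    (fun _ _ => (add_zero _).ge) t ⟨ht, le_rfl⟩
  rw [gronwallBound_ε0_δ0] at hgronwall
  rw [hcl.mem_iff_infDist_zero hne]
  exact (pow_eq_zero_iff two_ne_zero).1 (le_antisymm hgronwall (sq_nonneg _))

theorem IsZTransfDual.of_exp_neg_smul_apply_mem [CompleteSpace V]
    (h : ∀ t : ℝ, 0 ≤ t → ∀ x ∈ K, exp (-(t • L)) x ∈ K) : IsZTransfDual K ⇑L := by
  intro x hx y hy hxy
  have hderiv : HasDerivAt (fun s : ℝ => ⟪exp (-(s • L)) x, y⟫) (-⟪L x, y⟫) 0 := by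
    simpa using (hasDerivAt_exp_neg_smul_apply L x 0).inner ℝ (hasDerivAt_const 0 y)
  have hnonneg := hderiv.hasDerivWithinAt.nonneg_of_nonneg_Ioi (by simpa using hxy)
    fun t ht => hy _ (h t ht.le x hx)
  linarith

end

/-- `L` is a Z-transformation on the proper cone `K` iff
`exp(-tL)` maps `K` into `K` for every `t ≥ 0`. -/
theorem stmt3 [NormedAddCommGroup V] [InnerProductSpace ℝ V] [FiniteDimensional ℝ V]
    (K : Set V) (hK : IsProperCone K) (L : V →L[ℝ] V) :
    IsZTransfDual K (⇑L) ↔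
      ∀ t : ℝ, 0 ≤ t → ∀ x ∈ K, NormedSpace.exp (-(t • L)) x ∈ K := by
  obtain ⟨hcl, hconv, hcone, -, hint⟩ := hK
  exact ⟨fun hZ _ ht _ hx =>
      hZ.exp_neg_smul_apply_mem hcl hconv hcone (hint.mono interior_subset) ht hx,
    IsZTransfDual.of_exp_neg_smul_apply_mem⟩
end

section
/- Let A be an n×n real Z-matrix (all off-diagonal entries nonpositive) whose associated zero-sum matrix game has value zero. If A is irreducible, then the game is completely mixed: every x ≥ 0 with Σ xᵢ = 1 and Ax ≥ 0 satisfies x > 0 componentwise. -/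
open Matrix

variable {n : ℕ}

/-- A Z-matrix: all off-diagonal entries nonpositive. -/
def IsZMatrix (A : Matrix (Fin n) (Fin n) ℝ) : Prop :=
  ∀ i j, i ≠ j → A i j ≤ 0

/-- Irreducibility of a matrix: for every nonempty proper subset `S` of the indices,
some entry `A i j` with `i ∈ S`, `j ∉ S` is nonzero (equivalently, no simultaneous
row/column permutation gives a block triangular form with a zero off-diagonal block). -/
def MatIrreducible (A : Matrix (Fin n) (Fin n) ℝ) : Prop :=
  ∀ S : Finset (Fin n), S.Nonempty → S ≠ Finset.univ →
    ∃ i ∈ S, ∃ j, j ∉ S ∧ A i j ≠ 0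

/-- The probability simplex in `ℝⁿ`. -/
def probSimplex (n : ℕ) : Set (Fin n → ℝ) :=
  {x | (∀ i, 0 ≤ x i) ∧ ∑ i, x i = 1}

/-- The minimax value of the zero-sum matrix game of `A`. -/
noncomputable def matGameValue (A : Matrix (Fin n) (Fin n) ℝ) : ℝ :=
  ⨆ x : probSimplex n, ⨅ y : probSimplex n, dotProduct (A.mulVec x) (y : Fin n → ℝ)

/-!
If `x ≥ 0` and `A x ≥ 0` for a Z-matrix `A`, then in a row `j` with `x j = 0` every term
`A j k * x k` is nonpositive while their sum is nonnegative, so `A j k = 0` whenever `x k > 0`.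
Thus the zero set of `x` has no edges into the support of `x`; irreducibility then forces the
zero set to be empty, since the support is nonempty.
-/

theorem IsZMatrix.eq_zero_of_mulVec_nonneg {A : Matrix (Fin n) (Fin n) ℝ} (hZ : IsZMatrix A)
    {x : Fin n → ℝ} (hx : 0 ≤ x) {j : Fin n} (hxj : x j = 0) (hAx : 0 ≤ (A *ᵥ x) j)
    {k : Fin n} (hxk : 0 < x k) : A j k = 0 := by
  have hterm : ∀ m ∈ Finset.univ, A j m * x m ≤ 0 := by
    intro m _
    by_cases hjm : j = m
    · simp [← hjm, hxj]
    · exact mul_nonpos_of_nonpos_of_nonneg (hZ j m hjm) (hx m)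
  have hsum : ∑ m, A j m * x m = 0 :=
    le_antisymm (Finset.sum_nonpos hterm) (by simpa [mulVec, dotProduct] using hAx)
  have hk : A j k * x k = 0 :=
    (Finset.sum_eq_zero_iff_of_nonpos hterm).1 hsum k (Finset.mem_univ k)
  exact (mul_eq_zero.1 hk).resolve_right hxk.ne'

theorem MatIrreducible.pos_of_nonneg {A : Matrix (Fin n) (Fin n) ℝ} (hirr : MatIrreducible A)
    {x : Fin n → ℝ} (hx : 0 ≤ x) (hx0 : x ≠ 0)
    (hA : ∀ j k, x j = 0 → 0 < x k → A j k = 0) (i : Fin n) : 0 < x i := by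
  by_contra! hi
  set Z := Finset.univ.filter (fun k => x k = 0)
  have hZne : Z.Nonempty := ⟨i, by simpa [Z] using le_antisymm hi (hx i)⟩
  have hZu : Z ≠ Finset.univ := by
    refine fun h => hx0 (funext fun k => ?_)
    have hk : k ∈ Z := h ▸ Finset.mem_univ k
    simpa [Z] using hk
  obtain ⟨j, hj, k, hk, hjk⟩ := hirr Z hZne hZu
  simp only [Z, Finset.mem_filter, Finset.mem_univ, true_and] at hj hk
  exact hjk (hA j k hj ((hx k).lt_of_ne' hk))

theorem stmt5_general (A : Matrix (Fin n) (Fin n) ℝ)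
    (hZ : IsZMatrix A) (hirr : MatIrreducible A) :
    ∀ x ∈ probSimplex n, (∀ i, 0 ≤ A.mulVec x i) → ∀ i, 0 < x i := by
  intro x hx hAx
  have hx0 : x ≠ 0 := by
    rintro rfl
    simp [probSimplex] at hx
  exact hirr.pos_of_nonneg hx.1 hx0 fun j k hj hk =>
    hZ.eq_zero_of_mulVec_nonneg hx.1 hj (hAx j) hk

/-- an irreducible Z-matrix with game value zero is completely mixed:
every strategy `x` with `A x ≥ 0` is componentwise positive. -/
theorem stmt5 (A : Matrix (Fin n) (Fin n) ℝ)
    (hZ : IsZMatrix A) (hv : matGameValue A = 0) (hirr : MatIrreducible A) :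
    ∀ x ∈ probSimplex n, (∀ i, 0 ≤ A.mulVec x i) → ∀ i, 0 < x i :=
  stmt5_general A hZ hirr
end

section
/- Let A be an n×n real Z-matrix with game value zero. If the matrix game of A is completely mixed, then A is irreducible. -/
/-!
By the minimax theorem the game has an optimal pair `(x̄, ȳ)`; complete mixedness makes it
positive, and since the value is zero this forces `A x̄ = 0` and `ȳᵀ A = 0`. If `A` had a zero
block, `A i j = 0` for `i ∈ S` and `j ∉ S`, then `A` kills the restriction of `x̄` to `S` on the
rows of `S`, and on the other rows the Z-sign pattern makes it nonpositive; pairing with `ȳ > 0`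
shows it is zero there too. So the renormalised restriction of `x̄` is again optimal, yet it
vanishes off `S`.
-/

open Matrix

variable {n : ℕ}

/-- `(xb, yb)` is an optimal strategy pair for the matrix game of `A`. -/
def MatOptPair (A : Matrix (Fin n) (Fin n) ℝ) (xb yb : Fin n → ℝ) : Prop :=
  xb ∈ probSimplex n ∧ yb ∈ probSimplex n ∧
    ∀ x ∈ probSimplex n, ∀ y ∈ probSimplex n,
      dotProduct (A.mulVec x) yb ≤ dotProduct (A.mulVec xb) yb ∧
      dotProduct (A.mulVec xb) yb ≤ dotProduct (A.mulVec xb) y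

section DotProduct

variable {ι : Type*} [Fintype ι]

lemma eq_zero_of_nonneg_of_dotProduct_eq_zero {v w : ι → ℝ} (hv : 0 ≤ v) (hw : ∀ i, 0 < w i)
    (h : v ⬝ᵥ w = 0) : v = 0 := by
  funext i
  have hi := (Finset.sum_eq_zero_iff_of_nonneg fun j _ => mul_nonneg (hv j) (hw j).le).1 h i
    (Finset.mem_univ i)
  exact (mul_eq_zero.1 hi).resolve_right (hw i).ne'

lemma dotProduct_nonpos_of_nonpos_of_nonneg {v w : ι → ℝ} (hv : v ≤ 0) (hw : 0 ≤ w) :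
    v ⬝ᵥ w ≤ 0 := by
  simpa using dotProduct_nonneg_of_nonneg (neg_nonneg.2 hv) hw

end DotProduct

/-- Von Neumann's minimax theorem, as a case of Sion's. -/
theorem exists_matOptPair [Nonempty (Fin n)] (A : Matrix (Fin n) (Fin n) ℝ) :
    ∃ xb yb, MatOptPair A xb yb := by
  have hΔ : (stdSimplex ℝ (Fin n)).Nonempty := ⟨_, single_mem_stdSimplex ℝ (Classical.arbitrary _)⟩
  -- Sion's first variable is the minimising one: here the column player's strategy.
  obtain ⟨yb, hyb, xb, hxb, hsaddle⟩ :=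
    Sion.exists_isSaddlePointOn (f := fun y x => y ⬝ᵥ A *ᵥ x) hΔ (convex_stdSimplex ℝ _)
      (isCompact_stdSimplex ℝ _)
      (fun x _ => (Continuous.continuousOn (by fun_prop)).lowerSemicontinuousOn)
      (fun x _ => by
        simp_rw [dotProduct_comm _ (A *ᵥ x)]
        exact ((dotProductBilin ℝ ℝ (A *ᵥ x)).convexOn (convex_stdSimplex ℝ _)).quasiconvexOn)
      (convex_stdSimplex ℝ _) hΔ (isCompact_stdSimplex ℝ _)
      (fun y _ => (Continuous.continuousOn (by fun_prop)).upperSemicontinuousOn)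
      (fun y _ => by
        simp_rw [dotProduct_mulVec]
        exact ((dotProductBilin ℝ ℝ (y ᵥ* A)).concaveOn (convex_stdSimplex ℝ _)).quasiconcaveOn)
  refine ⟨xb, yb, hxb, hyb, fun x hx y hy => ?_⟩
  simp only [dotProduct_comm (A *ᵥ _)]
  exact ⟨hsaddle yb hyb x hx, hsaddle y hy xb hxb⟩

lemma bddBelow_range_dotProduct_mulVec (A : Matrix (Fin n) (Fin n) ℝ) (x : Fin n → ℝ) :
    BddBelow (Set.range fun y : probSimplex n => (A *ᵥ x) ⬝ᵥ (y : Fin n → ℝ)) := by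
  rw [← Set.image_eq_range]
  exact (isCompact_stdSimplex ℝ _).bddBelow_image (by fun_prop)

namespace MatOptPair

variable {A : Matrix (Fin n) (Fin n) ℝ} {xb yb : Fin n → ℝ}

theorem matGameValue_eq (h : MatOptPair A xb yb) : matGameValue A = (A *ᵥ xb) ⬝ᵥ yb := by
  obtain ⟨hxb, hyb, hsaddle⟩ := h
  have : Nonempty (probSimplex n) := ⟨⟨xb, hxb⟩⟩
  have hinf : ∀ x : probSimplex n, ⨅ y : probSimplex n, (A *ᵥ x) ⬝ᵥ (y : Fin n → ℝ) ≤
      (A *ᵥ xb) ⬝ᵥ yb := fun x =>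
    (ciInf_le (bddBelow_range_dotProduct_mulVec A x) ⟨yb, hyb⟩).trans (hsaddle x x.2 yb hyb).1
  exact le_antisymm (ciSup_le hinf) <| le_ciSup_of_le ⟨_, Set.forall_mem_range.2 hinf⟩ ⟨xb, hxb⟩ <|
    le_ciInf fun y => (hsaddle xb hxb y y.2).2

lemma mulVec_eq_zero (h : MatOptPair A xb yb) (h0 : (A *ᵥ xb) ⬝ᵥ yb = 0)
    (hyb : ∀ i, 0 < yb i) : A *ᵥ xb = 0 := by
  refine eq_zero_of_nonneg_of_dotProduct_eq_zero (fun i => ?_) hyb h0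
  simpa [h0, dotProduct_single] using
    (h.2.2 xb h.1 (Pi.single i 1) (single_mem_stdSimplex ℝ i)).2

lemma vecMul_eq_zero (h : MatOptPair A xb yb) (h0 : (A *ᵥ xb) ⬝ᵥ yb = 0)
    (hxb : ∀ i, 0 < xb i) : yb ᵥ* A = 0 := by
  have hdot : (-(yb ᵥ* A)) ⬝ᵥ xb = 0 := by
    rw [neg_dotProduct, ← dotProduct_mulVec, dotProduct_comm, h0, neg_zero]
  refine neg_eq_zero.1 (eq_zero_of_nonneg_of_dotProduct_eq_zero (fun j => ?_) hxb hdot)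
  have := (h.2.2 (Pi.single j 1) (single_mem_stdSimplex ℝ j) yb h.2.1).1
  rw [h0, dotProduct_comm, dotProduct_mulVec, dotProduct_single, mul_one] at this
  simpa using this

lemma of_zero_le_mulVec_of_vecMul_nonpos (hxb : xb ∈ probSimplex n) (hyb : yb ∈ probSimplex n)
    (hAx : 0 ≤ A *ᵥ xb) (hyA : yb ᵥ* A ≤ 0) : MatOptPair A xb yb := by
  have hcol : ∀ x ∈ probSimplex n, (A *ᵥ x) ⬝ᵥ yb ≤ 0 := fun x hx => by
    rw [dotProduct_comm, dotProduct_mulVec]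
    exact dotProduct_nonpos_of_nonpos_of_nonneg hyA hx.1
  have hrow : ∀ y ∈ probSimplex n, 0 ≤ (A *ᵥ xb) ⬝ᵥ y := fun y hy =>
    dotProduct_nonneg_of_nonneg hAx hy.1
  exact ⟨hxb, hyb, fun x hx y hy => ⟨(hcol x hx).trans (hrow yb hyb),
    (hcol xb hxb).trans (hrow y hy)⟩⟩

end MatOptPair

lemma smul_indicator_mem_probSimplex {x : Fin n → ℝ} (hx : 0 ≤ x) {S : Finset (Fin n)}
    (hS : 0 < ∑ j ∈ S, x j) :
    (∑ j ∈ S, x j)⁻¹ • (S : Set (Fin n)).indicator x ∈ probSimplex n := by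
  refine ⟨fun i => smul_nonneg (inv_nonneg.2 hS.le) (Set.indicator_nonneg (fun j _ => hx j) i), ?_⟩
  simp only [Pi.smul_apply, smul_eq_mul, ← Finset.mul_sum,
    Finset.sum_indicator_subset _ (Finset.subset_univ S), inv_mul_cancel₀ hS.ne']

lemma IsZMatrix.mulVec_indicator_eq_zero {A : Matrix (Fin n) (Fin n) ℝ} (hZ : IsZMatrix A)
    {S : Finset (Fin n)} (hS : ∀ i ∈ S, ∀ j, j ∉ S → A i j = 0) {x y : Fin n → ℝ} (hx : 0 ≤ x)
    (hAx : A *ᵥ x = 0) (hy : ∀ i, 0 < y i) (hyA : y ᵥ* A = 0) :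
    A *ᵥ (S : Set (Fin n)).indicator x = 0 := by
  have hle : A *ᵥ (S : Set (Fin n)).indicator x ≤ 0 := by
    intro i
    simp only [mulVec, dotProduct, Pi.zero_apply]
    by_cases hi : i ∈ S
    · rw [← show ∑ j, A i j * x j = 0 from congrFun hAx i]
      refine le_of_eq (Finset.sum_congr rfl fun j _ => ?_)
      by_cases hj : j ∈ S
      · simp [hj]
      · simp [hj, hS i hi j hj]
    · refine Finset.sum_nonpos fun j _ => ?_
      by_cases hj : j ∈ S
      · simpa [hj] using mul_nonpos_of_nonpos_of_nonneg (hZ i j (ne_of_mem_of_not_mem hj hi).symm)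
          (hx j)
      · simp [hj]
  have hdot : (-(A *ᵥ (S : Set (Fin n)).indicator x)) ⬝ᵥ y = 0 := by
    rw [neg_dotProduct, dotProduct_comm, dotProduct_mulVec, hyA, zero_dotProduct, neg_zero]
  exact neg_eq_zero.1 (eq_zero_of_nonneg_of_dotProduct_eq_zero (neg_nonneg.2 hle) hy hdot)

/-- a Z-matrix with game value zero whose game is completely mixed
(every optimal pair is componentwise positive) is irreducible. -/
theorem stmt6 (A : Matrix (Fin n) (Fin n) ℝ)
    (hZ : IsZMatrix A) (hv : matGameValue A = 0)
    (hcm : ∀ xb yb, MatOptPair A xb yb → (∀ i, 0 < xb i) ∧ (∀ i, 0 < yb i)) :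
    MatIrreducible A := by
  intro S ⟨i0, hi0⟩ hSuniv
  by_contra! hblock
  have : Nonempty (Fin n) := ⟨i0⟩
  obtain ⟨xb, yb, hopt⟩ := exists_matOptPair A
  have h0 : (A *ᵥ xb) ⬝ᵥ yb = 0 := hopt.matGameValue_eq ▸ hv
  obtain ⟨hxb, hyb⟩ := hcm xb yb hopt
  have hyA := hopt.vecMul_eq_zero h0 hxb
  have hc : 0 < ∑ j ∈ S, xb j := Finset.sum_pos (fun j _ => hxb j) ⟨i0, hi0⟩
  set x' := (∑ j ∈ S, xb j)⁻¹ • (S : Set (Fin n)).indicator xb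
  have hAx' : A *ᵥ x' = 0 := by
    rw [mulVec_smul, hZ.mulVec_indicator_eq_zero hblock (fun j => (hxb j).le)
      (hopt.mulVec_eq_zero h0 hyb) hyb hyA, smul_zero]
  have hopt' : MatOptPair A x' yb := MatOptPair.of_zero_le_mulVec_of_vecMul_nonpos
    (smul_indicator_mem_probSimplex (fun j => (hxb j).le) hc) hopt.2.1 hAx'.ge hyA.le
  obtain ⟨j0, hj0⟩ : ∃ j, j ∉ S := by simpa [Finset.eq_univ_iff_forall] using hSuniv
  simpa [x', hj0] using (hcm x' yb hopt').1 j0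
end

section
/- Let V be a Euclidean Jordan algebra with symmetric cone K and let c be an idempotent. If z = x + y with x ∈ V(c,1), y ∈ V(c,½), and z ∈ K, then y = 0. -/
open scoped RealInnerProductSpace

variable {V : Type*}

/-- A Euclidean Jordan algebra structure on the real inner product space `V`:
a commutative bilinear product satisfying the Jordan identity, with a unit, such that
the inner product (the trace inner product) is associative with the product. -/
structure EJA (V : Type*) [NormedAddCommGroup V] [InnerProductSpace ℝ V] where
  jmul : V →ₗ[ℝ] V →ₗ[ℝ] V
  comm : ∀ x y, jmul x y = jmul y x
  jordan : ∀ x y, jmul (jmul x y) (jmul x x) = jmul x (jmul y (jmul x x))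
  unit : V
  unit_mul : ∀ x, jmul unit x = x
  assoc_inner : ∀ x y z, ⟪jmul x y, z⟫ = ⟪x, jmul y z⟫

namespace EJA

variable [NormedAddCommGroup V] [InnerProductSpace ℝ V] (J : EJA V)

/-- The symmetric cone of squares `K = {x∘x : x ∈ V}`. -/
def cone : Set V := {z | ∃ x, J.jmul x x = z}

/-- `c` is an idempotent: `c∘c = c`. -/
def IsIdem (c : V) : Prop := J.jmul c c = c

/-- `c` is a primitive idempotent: a nonzero idempotent that is not the sum of two
nonzero idempotents. -/
def IsPrimitiveIdem (c : V) : Prop :=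
  J.IsIdem c ∧ c ≠ 0 ∧
    ¬∃ a b : V, J.IsIdem a ∧ a ≠ 0 ∧ J.IsIdem b ∧ b ≠ 0 ∧ c = a + b

/-- A Jordan frame: a family of mutually orthogonal primitive idempotents summing to
the unit element. -/
def IsJordanFrame {m : ℕ} (f : Fin m → V) : Prop :=
  (∀ i, J.IsPrimitiveIdem (f i)) ∧
    (∀ i j, i ≠ j → J.jmul (f i) (f j) = 0) ∧ (∑ i, f i) = J.unit

end EJA


private lemma lstar_aux [NormedAddCommGroup V] [InnerProductSpace ℝ V] (J : EJA V) (x z y : V) :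
    J.jmul (J.jmul z y) (J.jmul x x) + (2:ℝ) • J.jmul (J.jmul x y) (J.jmul x z)
      = J.jmul z (J.jmul y (J.jmul x x)) + (2:ℝ) • J.jmul x (J.jmul y (J.jmul x z)) := by
  have A := J.jordan (x + z) y
  have B := J.jordan (x - z) y
  have C := J.jordan z y
  simp only [map_add, map_sub, LinearMap.add_apply, LinearMap.sub_apply] at A B
  have hxz : J.jmul z x = J.jmul x z := J.comm z x
  rw [hxz] at A B
  linear_combination (norm := module) ((2:ℝ)⁻¹ : ℝ) • A - ((2:ℝ)⁻¹ : ℝ) • B - C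

private lemma selfadj_aux [NormedAddCommGroup V] [InnerProductSpace ℝ V] (J : EJA V)
    (d u v : V) : ⟪J.jmul d u, v⟫ = ⟪u, J.jmul d v⟫ := by
  rw [J.comm d u, J.assoc_inner]

/-- if `z = x + y ∈ K` with `x ∈ V(c,1)` and `y ∈ V(c,½)` for an
idempotent `c`, then `y = 0`. -/
theorem stmt11 [NormedAddCommGroup V] [InnerProductSpace ℝ V] (J : EJA V)
    (c x y z : V) (hc : J.IsIdem c) (hc0 : c ≠ 0)
    (hx : J.jmul c x = x) (hy : J.jmul c y = (1 / 2 : ℝ) • y)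
    (hz : z = x + y) (hzK : z ∈ J.cone) : y = 0 := by
  obtain ⟨w, hw⟩ := hzK
  set d := J.unit - c with hd
  have hmulunit : ∀ v : V, J.jmul v J.unit = v := fun v => by rw [J.comm]; exact J.unit_mul v
  have hcd : J.jmul c d = 0 := by rw [hd, map_sub, hmulunit, hc, sub_self]
  have hdapp : ∀ v, J.jmul d v = v - J.jmul c v := by
    intro v; rw [hd, map_sub, LinearMap.sub_apply, J.unit_mul]
  have hdd : J.jmul d d = d := by rw [hdapp d, hcd, sub_zero]
  have hdx : J.jmul d x = 0 := by rw [hdapp x, hx, sub_self]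
  have hdy : J.jmul d y = (1/2 : ℝ) • y := by rw [hdapp y, hy]; module
  have hdz : J.jmul d z = (1/2 : ℝ) • y := by rw [hz, map_add, hdx, hdy, zero_add]
  have hxd0 : ⟪x, d⟫ = 0 := by
    rw [← hx, J.comm c x, J.assoc_inner, hcd, inner_zero_right]
  have hyd0 : ⟪y, d⟫ = 0 := by
    have h1 : ⟪J.jmul z d, d⟫ = ⟪z, d⟫ := by rw [J.assoc_inner z d d, hdd]
    rw [J.comm z d, hdz, real_inner_smul_left] at h1
    have h2 : ⟪z, d⟫ = ⟪y, d⟫ := by rw [hz, inner_add_left, hxd0, zero_add]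
    rw [h2] at h1
    linarith
  have hzd0 : ⟪z, d⟫ = 0 := by rw [hz, inner_add_left, hxd0, hyd0]; ring
  have hLww : ⟪J.jmul d w, w⟫ = 0 := by
    rw [J.assoc_inner d w w, hw, real_inner_comm]; exact hzd0
  -- cubic identity: 3 L² v = L v + 2 L³ v
  have cubic : ∀ v : V, (3:ℝ) • J.jmul d (J.jmul d v) =
      J.jmul d v + (2:ℝ) • J.jmul d (J.jmul d (J.jmul d v)) := by
    intro v
    have h := lstar_aux J d v d
    simp only [hdd, J.comm v d, J.comm (J.jmul d v) d] at h
    linear_combination (norm := module) h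
  have hcw := cubic w
  -- Peirce decomposition of w into eigenvectors of L_d
  obtain ⟨a, b, hLa, hLb, hLwab⟩ : ∃ a b : V, J.jmul d a = a ∧
      J.jmul d b = (1/2:ℝ) • b ∧ J.jmul d w = a + (1/2:ℝ) • b := by
    refine ⟨(2:ℝ) • J.jmul d (J.jmul d w) - J.jmul d w,
            (4:ℝ) • J.jmul d w - (4:ℝ) • J.jmul d (J.jmul d w), ?_, ?_, ?_⟩
    · rw [map_sub, map_smul]
      linear_combination (norm := module) (-1:ℝ) • hcw
    · rw [map_sub, map_smul, map_smul]
      linear_combination (norm := module) (2:ℝ) • hcw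
    · module
  set f := w - a - b with hf
  have hLf : J.jmul d f = 0 := by
    rw [hf, map_sub, map_sub, hLa, hLb, hLwab]; module
  have hab : ⟪a, b⟫ = 0 := by
    have h := selfadj_aux J d a b
    rw [hLa, hLb, real_inner_smul_right] at h
    linarith
  have haf : ⟪a, f⟫ = 0 := by
    have h := selfadj_aux J d a f
    rwa [hLa, hLf, inner_zero_right] at h
  have hbf : ⟪b, f⟫ = 0 := by
    have h := selfadj_aux J d b f
    rw [hLb, hLf, inner_zero_right, real_inner_smul_left] at h
    linarith
  have hwabf : w = a + b + f := by rw [hf]; abel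
  have e1 : ⟪J.jmul d w, w⟫ = ⟪a, w⟫ + 1/2 * ⟪b, w⟫ := by
    rw [hLwab, inner_add_left, real_inner_smul_left]
  have e2 : ⟪a, w⟫ = ⟪a, a⟫ := by
    rw [hwabf, inner_add_right, inner_add_right, haf, hab]; ring
  have hba : ⟪b, a⟫ = 0 := by rw [real_inner_comm]; exact hab
  have e3 : ⟪b, w⟫ = ⟪b, b⟫ := by
    rw [hwabf, inner_add_right, inner_add_right, hbf, hba]; ring
  have ha0 : a = 0 := by
    have p1 := real_inner_self_nonneg (x := a)
    have p2 := real_inner_self_nonneg (x := b)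
    have : ⟪a, a⟫ = 0 := by rw [e1, e2, e3] at hLww; linarith
    exact inner_self_eq_zero.mp this
  have hb0 : b = 0 := by
    have p1 := real_inner_self_nonneg (x := a)
    have p2 := real_inner_self_nonneg (x := b)
    have : ⟪b, b⟫ = 0 := by rw [e1, e2, e3] at hLww; linarith
    exact inner_self_eq_zero.mp this
  have hdw : J.jmul d w = 0 := by rw [hLwab, ha0, hb0]; simp
  -- w ∘ y = 0 via the Jordan identity
  have hwy : J.jmul w y = 0 := by
    have h := J.jordan w d
    rw [J.comm w d, hdw, hw, hdz, map_smul] at h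
    have h0 : (J.jmul (0:V)) z = 0 := by simp
    rw [h0] at h
    have := h.symm
    rw [smul_eq_zero] at this
    exact this.resolve_left (by norm_num)
  have hzy : ⟪z, y⟫ = 0 := by rw [← hw, J.assoc_inner, hwy, inner_zero_right]
  have hxy : ⟪x, y⟫ = 0 := by
    have h := selfadj_aux J c x y
    rw [hx, hy, real_inner_smul_right] at h
    linarith
  have : ⟪y, y⟫ = 0 := by
    rw [hz, inner_add_left, hxy, zero_add, real_inner_comm] at hzy
    exact hzy
  exact inner_self_eq_zero.mp this
end

section
/- Let V be a Euclidean Jordan algebra with symmetric cone K, L a Z-transformation on K, and x̄ ∈ K nonzero with L(x̄) ∈ K and x̄ not in the interior of K. Write x̄ = Σ_{i=1}^k x̄ᵢeᵢ with x̄ᵢ > 0 over a Jordan frame {e₁,…,eₙ} with 1 ≤ k < n, and set c = e₁ + ⋯ + e_k. Then L(V(c,1)) ⊥ V(c,0) and L(x̄) ∈ V(c,1). -/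
open scoped RealInnerProductSpace

variable {V : Type*}

/-- A Z-transformation relative to a self-dual cone `K`. -/
def IsZTransf [NormedAddCommGroup V] [InnerProductSpace ℝ V] (K : Set V) (L : V → V) : Prop :=
  ∀ x ∈ K, ∀ y ∈ K, ⟪x, y⟫ = 0 → ⟪L x, y⟫ ≤ 0

section Aux

variable [NormedAddCommGroup V] [InnerProductSpace ℝ V] (J : EJA V)

/-- Linearized Jordan identity. -/
lemma EJA.lin_jordan (x y z : V) :
    J.jmul (J.jmul x z) (J.jmul x y) + J.jmul (J.jmul x z) (J.jmul y x)
      + J.jmul (J.jmul y z) (J.jmul x x)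
    = J.jmul x (J.jmul z (J.jmul x y)) + J.jmul x (J.jmul z (J.jmul y x))
      + J.jmul y (J.jmul z (J.jmul x x)) := by
  have hp := J.jordan (x + y) z
  have hm := J.jordan (x - y) z
  have h3 := J.jordan y z
  simp only [map_add, map_sub, LinearMap.add_apply, LinearMap.sub_apply] at hp hm
  linear_combination (norm := module) (2:ℝ)⁻¹ • hp - (2:ℝ)⁻¹ • hm - h3

/-- If `c` is idempotent and `a` lies in the Peirce 1- or 0-space of `c`, then the
multiplication operators of `c` and `a` commute. -/
lemma EJA.commL {c a : V} (hc : J.jmul c c = c) (ha : J.jmul c a = a ∨ J.jmul c a = 0) :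
    ∀ z, J.jmul c (J.jmul a z) = J.jmul a (J.jmul c z) := by
  intro z
  have h := J.lin_jordan c a z
  rw [hc] at h
  rw [J.comm a c] at h
  rcases ha with ha | ha <;> rw [ha] at h
  · rw [J.comm (J.jmul c z) a, J.comm (J.jmul a z) c, J.comm z a, J.comm z c] at h
    linear_combination (norm := module) -h
  · simp only [map_zero, LinearMap.zero_apply, zero_add, add_zero] at h
    rw [J.comm (J.jmul a z) c, J.comm z c] at h
    exact h

/-- Minimal polynomial relation for the multiplication operator of an idempotent. -/
lemma EJA.minpoly_idem {d : V} (hd : J.jmul d d = d) (y : V) :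
    (2:ℝ) • J.jmul d (J.jmul d (J.jmul d y)) =
      (3:ℝ) • J.jmul d (J.jmul d y) - J.jmul d y := by
  have h := J.lin_jordan d y d
  rw [hd] at h
  rw [hd] at h
  rw [J.comm y d] at h
  rw [J.comm (J.jmul d y) d] at h
  linear_combination (norm := module) -h

/-- For an idempotent `d`, the operator `L_d` is positive semidefinite, and
`⟪d∘s, s⟫ = 0` forces `d∘s = 0`. -/
lemma EJA.idem_psd {d : V} (hd : J.jmul d d = d) (s : V) :
    0 ≤ ⟪J.jmul d s, s⟫ ∧ (⟪J.jmul d s, s⟫ = 0 → J.jmul d s = 0) := by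
  have hr : Real.sqrt 2 * Real.sqrt 2 = 2 := Real.mul_self_sqrt (by norm_num)
  set r := Real.sqrt 2 with hrdef
  set Sop : V → V := fun z => (2-2*r) • J.jmul d (J.jmul d z) + (2*r-1) • J.jmul d z
    with hSop
  have h3 : ∀ z, J.jmul d (J.jmul d (J.jmul d z))
      = (3/2:ℝ) • J.jmul d (J.jmul d z) - (1/2:ℝ) • J.jmul d z := by
    intro z
    have := J.minpoly_idem hd z
    linear_combination (norm := module) (2:ℝ)⁻¹ • this
  have hS2 : ∀ z, Sop (Sop z) = J.jmul d z := by
    intro z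
    simp only [hSop, map_add, map_smul, map_sub]
    rw [h3 (J.jmul d z), h3 z]
    match_scalars
    · linear_combination (-1:ℝ) * hr
    · linear_combination (1:ℝ) * hr
  have hsa : ∀ z w, ⟪J.jmul d z, w⟫ = ⟪z, J.jmul d w⟫ := by
    intro z w; rw [J.comm d z]; exact J.assoc_inner z d w
  have hSsa : ∀ z w, ⟪Sop z, w⟫ = ⟪z, Sop w⟫ := by
    intro z w
    simp only [hSop, inner_add_left, inner_add_right, real_inner_smul_left,
      real_inner_smul_right, hsa]
  have key : ⟪J.jmul d s, s⟫ = ⟪Sop s, Sop s⟫ := by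
    rw [← hS2 s, hSsa (Sop s) s, real_inner_comm]
  constructor
  · rw [key]; exact real_inner_self_nonneg
  · intro h0
    rw [key] at h0
    have hs0 : Sop s = 0 := by rwa [inner_self_eq_zero] at h0
    rw [← hS2 s, hs0]
    simp [hSop]

/-- Products of the Peirce 1- and 0-spaces of an idempotent vanish. -/
lemma EJA.peirceP {c a b : V} (hc : J.jmul c c = c) (ha : J.jmul c a = a)
    (hb : J.jmul c b = 0) : J.jmul a b = 0 := by
  have h1 : J.jmul c (J.jmul a b) = 0 := by
    rw [J.commL hc (Or.inl ha) b, hb, map_zero]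
  have h2 : J.jmul c (J.jmul b a) = J.jmul b a := by
    rw [J.commL hc (Or.inr hb) a, ha]
  rw [J.comm a b, ← h2, J.comm b a, h1]

/-- The Peirce 1- and 0-spaces of an idempotent are orthogonal. -/
lemma EJA.orth10 {c a b : V} (ha : J.jmul c a = a) (hb : J.jmul c b = 0) :
    ⟪a, b⟫ = 0 := by
  rw [← ha, J.comm c a, J.assoc_inner a c b, hb, inner_zero_right]

/-- Elements of the cone pair nonnegatively with idempotents. -/
lemma EJA.cone_idem_nonneg {z d : V} (hz : z ∈ J.cone) (hd : J.jmul d d = d) :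
    0 ≤ ⟪z, d⟫ := by
  obtain ⟨s, rfl⟩ := hz
  have h : ⟪J.jmul s s, d⟫ = ⟪J.jmul d s, s⟫ := by
    rw [J.assoc_inner s s d, J.comm s d, real_inner_comm]
  rw [h]
  exact (J.idem_psd hd s).1

/-- An element of the cone orthogonal to an idempotent is annihilated by it. -/
lemma EJA.cone_idem_zero {z d : V} (hz : z ∈ J.cone) (hd : J.jmul d d = d)
    (h0 : ⟪z, d⟫ = 0) : J.jmul d z = 0 := by
  obtain ⟨s, rfl⟩ := hz
  have h : ⟪J.jmul s s, d⟫ = ⟪J.jmul d s, s⟫ := by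
    rw [J.assoc_inner s s d, J.comm s d, real_inner_comm]
  rw [h] at h0
  have hds : J.jmul d s = 0 := (J.idem_psd hd s).2 h0
  rw [J.commL hd (Or.inr hds) s, hds, map_zero]

/-- Expansion of the square of `x + t • z` for an idempotent `z`. -/
lemma EJA.sq_expand {z : V} (hz : J.jmul z z = z) (x : V) (t : ℝ) :
    J.jmul (x + t • z) (x + t • z)
      = J.jmul x x + (2*t) • J.jmul x z + (t*t) • z := by
  simp only [map_add, map_smul, LinearMap.add_apply, LinearMap.smul_apply]
  rw [J.comm z x, hz]
  module

/-- An affine function of `t` that is nonnegative for all `t` has zero slope. -/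
lemma real_affine_nonneg_slope {A C : ℝ} (h : ∀ t : ℝ, 0 ≤ A + t * C) : C = 0 := by
  by_contra hC
  have h1 := h (-(A+1)/C)
  rw [div_mul_cancel₀ _ hC] at h1
  linarith

end Aux

/-- let `L` be a Z-transformation on the symmetric cone, and let
`x̄ = ∑_{i<k} x̄ᵢ eᵢ ∈ K` (with `x̄ᵢ > 0`, `1 ≤ k < n`) satisfy `L(x̄) ∈ K`; with
`c = e₁ + ⋯ + e_k`, one has `L(V(c,1)) ⊥ V(c,0)` and `L(x̄) ∈ V(c,1)`. -/
theorem stmt13 [NormedAddCommGroup V] [InnerProductSpace ℝ V] (J : EJA V)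
    {n : ℕ} (f : Fin n → V) (hf : J.IsJordanFrame f)
    (k : ℕ) (hk1 : 1 ≤ k) (hkn : k < n)
    (w : Fin n → ℝ) (hwpos : ∀ i : Fin n, (i : ℕ) < k → 0 < w i)
    (hwzero : ∀ i : Fin n, k ≤ (i : ℕ) → w i = 0)
    (xb : V) (hxb : xb = ∑ i, w i • f i) (hxbK : xb ∈ J.cone)
    (L : V →ₗ[ℝ] V) (hZ : IsZTransf J.cone (⇑L)) (hLxb : L xb ∈ J.cone)
    (c : V) (hcdef : c = ∑ i ∈ Finset.univ.filter (fun i : Fin n => (i : ℕ) < k), f i) :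
    (∀ u, J.jmul c u = u → ∀ v, J.jmul c v = 0 → ⟪L u, v⟫ = 0) ∧
      J.jmul c (L xb) = L xb := by
  obtain ⟨hprim, horth, hsum⟩ := hf
  have idem_f : ∀ i, J.jmul (f i) (f i) = f i := fun i => (hprim i).1
  have hcf1 : ∀ i : Fin n, (i : ℕ) < k → J.jmul c (f i) = f i := by
    intro i hi
    have h : J.jmul c (f i)
        = ∑ j ∈ Finset.univ.filter (fun j : Fin n => (j : ℕ) < k), J.jmul (f i) (f j) := by
      rw [hcdef, J.comm, map_sum]
    rw [h]
    exact (Finset.sum_eq_single i (fun b _ hb => horth i b (Ne.symm hb))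
      (fun hni => absurd (Finset.mem_filter.mpr ⟨Finset.mem_univ i, hi⟩) hni)).trans (idem_f i)
  have hcf0 : ∀ i : Fin n, k ≤ (i : ℕ) → J.jmul c (f i) = 0 := by
    intro i hik
    have h : J.jmul c (f i)
        = ∑ j ∈ Finset.univ.filter (fun j : Fin n => (j : ℕ) < k), J.jmul (f i) (f j) := by
      rw [hcdef, J.comm, map_sum]
    rw [h]
    apply Finset.sum_eq_zero
    intro j hj
    have hjk : (j : ℕ) < k := (Finset.mem_filter.mp hj).2
    exact horth i j (fun hij => by subst hij; omega)
  have hcc : J.jmul c c = c := by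
    have h : J.jmul c c
        = ∑ j ∈ Finset.univ.filter (fun j : Fin n => (j : ℕ) < k), J.jmul c (f j) := by
      nth_rewrite 2 [hcdef]
      exact map_sum _ _ _
    rw [h, Finset.sum_congr rfl (fun j hj => hcf1 j (Finset.mem_filter.mp hj).2), ← hcdef]
  have hcx : J.jmul c xb = xb := by
    rw [hxb, map_sum]
    refine Finset.sum_congr rfl fun i _ => ?_
    rw [map_smul]
    by_cases hik : (i : ℕ) < k
    · rw [hcf1 i hik]
    · rw [hwzero i (le_of_not_gt hik)]; simp
  have hce : J.jmul c J.unit = c := by rw [J.comm, J.unit_mul]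
  set d := J.unit - c with hddef
  have hcd : J.jmul c d = 0 := by rw [hddef, map_sub, hce, hcc, sub_self]
  have expandd : ∀ z, J.jmul d z = z - J.jmul c z := by
    intro z
    rw [hddef]
    simp only [map_sub, LinearMap.sub_apply, J.unit_mul]
  have hdd : J.jmul d d = d := by rw [expandd, hcd, sub_zero]
  have hP1sq : ∀ {x : V}, J.jmul c x = x → J.jmul c (J.jmul x x) = J.jmul x x := by
    intro x hx; rw [J.commL hcc (Or.inl hx) x, hx]
  have hP0sq : ∀ {x : V}, J.jmul c x = 0 → J.jmul c (J.jmul x x) = 0 := by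
    intro x hx; rw [J.commL hcc (Or.inr hx) x, hx, map_zero]
  have hff : ∀ i j : Fin n, i ≠ j → ⟪f i, f j⟫ = 0 := by
    intro i j hij
    rw [← idem_f i, J.assoc_inner, horth i j hij, inner_zero_right]
  have hxbf : ∀ i : Fin n, k ≤ (i : ℕ) → ⟪xb, f i⟫ = 0 := by
    intro i hik
    rw [hxb, sum_inner]
    apply Finset.sum_eq_zero
    intro j _
    rw [real_inner_smul_left]
    by_cases hji : j = i
    · subst hji; rw [hwzero j hik, zero_mul]
    · rw [hff j i hji, mul_zero]
  have sqK : ∀ s : V, J.jmul s s ∈ J.cone := fun s => ⟨s, rfl⟩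
  have fiK : ∀ i, f i ∈ J.cone := fun i => ⟨f i, idem_f i⟩
  have stageA0 : ∀ i : Fin n, k ≤ (i : ℕ) → ⟪L xb, f i⟫ = 0 := by
    intro i hik
    have hle : ⟪L xb, f i⟫ ≤ 0 := hZ xb hxbK (f i) (fiK i) (hxbf i hik)
    have hge : 0 ≤ ⟪L xb, f i⟫ := J.cone_idem_nonneg hLxb (idem_f i)
    linarith
  have dec1 : ∀ u, J.jmul c u = u →
      u = ∑ i ∈ Finset.univ.filter (fun i : Fin n => (i : ℕ) < k), J.jmul (f i) u := by
    intro u hu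
    have h0 : ∑ i, J.jmul (f i) u = u := by
      rw [← LinearMap.sum_apply, ← map_sum, hsum, J.unit_mul]
    rw [← Finset.sum_filter_add_sum_filter_not Finset.univ
      (fun i : Fin n => (i : ℕ) < k) (fun i => J.jmul (f i) u)] at h0
    have h1 : ∑ i ∈ Finset.univ.filter (fun i : Fin n => ¬ (i : ℕ) < k),
        J.jmul (f i) u = 0 := by
      apply Finset.sum_eq_zero
      intro i hi
      have hik : k ≤ (i : ℕ) := le_of_not_gt (Finset.mem_filter.mp hi).2
      rw [J.comm]
      exact J.peirceP hcc hu (hcf0 i hik)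
    rw [h1, add_zero] at h0
    exact h0.symm
  have dec0 : ∀ v, J.jmul c v = 0 →
      v = ∑ i ∈ Finset.univ.filter (fun i : Fin n => ¬ (i : ℕ) < k), J.jmul (f i) v := by
    intro v hv
    have h0 : ∑ i, J.jmul (f i) v = v := by
      rw [← LinearMap.sum_apply, ← map_sum, hsum, J.unit_mul]
    rw [← Finset.sum_filter_add_sum_filter_not Finset.univ
      (fun i : Fin n => (i : ℕ) < k) (fun i => J.jmul (f i) v)] at h0
    have h1 : ∑ i ∈ Finset.univ.filter (fun i : Fin n => (i : ℕ) < k),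
        J.jmul (f i) v = 0 := by
      apply Finset.sum_eq_zero
      intro i hi
      exact J.peirceP hcc (hcf1 i (Finset.mem_filter.mp hi).2) hv
    rw [h1, zero_add] at h0
    exact h0.symm
  have stageA : ∀ v, J.jmul c v = 0 → ⟪L xb, v⟫ = 0 := by
    intro v hv
    have hrw : ⟪L xb, v⟫ = ∑ i ∈ Finset.univ.filter (fun i : Fin n => ¬ (i : ℕ) < k),
        ⟪L xb, J.jmul (f i) v⟫ := by
      conv_lhs => rw [dec0 v hv]
      rw [inner_sum]
    rw [hrw]
    apply Finset.sum_eq_zero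
    intro i hi
    have hik : k ≤ (i : ℕ) := le_of_not_gt (Finset.mem_filter.mp hi).2
    have key : ∀ t : ℝ, 0 ≤ (-⟪L xb, J.jmul v v⟫)
        + t * (-(2 * ⟪L xb, J.jmul v (f i)⟫)) := by
      intro t
      have hyP0 : J.jmul c (v + t • f i) = 0 := by
        rw [map_add, map_smul, hv, hcf0 i hik, smul_zero, add_zero]
      have hq : ⟪L xb, J.jmul (v + t • f i) (v + t • f i)⟫ ≤ 0 :=
        hZ xb hxbK _ (sqK _) (J.orth10 hcx (hP0sq hyP0))
      rw [J.sq_expand (idem_f i) v t, inner_add_right, inner_add_right,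
        real_inner_smul_right, real_inner_smul_right, stageA0 i hik, mul_zero,
        add_zero] at hq
      nlinarith [hq]
    have hC := real_affine_nonneg_slope key
    have hz : ⟪L xb, J.jmul v (f i)⟫ = 0 := by linarith
    rw [J.comm (f i) v]
    exact hz
  have stageB0 : ∀ t, J.jmul c t = 0 → ∀ j : Fin n, (j : ℕ) < k →
      ⟪L (f j), J.jmul t t⟫ = 0 := by
    intro t ht j hjk
    have hterm : ∀ j' : Fin n, w j' * ⟪L (f j'), J.jmul t t⟫ ≤ 0 := by
      intro j'
      by_cases hj' : (j' : ℕ) < k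
      · have hle : ⟪L (f j'), J.jmul t t⟫ ≤ 0 :=
          hZ (f j') (fiK j') _ (sqK t) (J.orth10 (hcf1 j' hj') (hP0sq ht))
        exact mul_nonpos_of_nonneg_of_nonpos (le_of_lt (hwpos j' hj')) hle
      · rw [hwzero j' (le_of_not_gt hj'), zero_mul]
    have hsum0 : ∑ j' : Fin n, w j' * ⟪L (f j'), J.jmul t t⟫ = 0 := by
      have hrw : ⟪L xb, J.jmul t t⟫ = ∑ j' : Fin n, w j' * ⟪L (f j'), J.jmul t t⟫ := by
        rw [hxb, map_sum, sum_inner]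
        refine Finset.sum_congr rfl fun j' _ => ?_
        rw [map_smul, real_inner_smul_left]
      rw [← hrw]
      exact stageA _ (hP0sq ht)
    have hall := (Finset.sum_eq_zero_iff_of_nonpos (fun j' _ => hterm j')).mp hsum0 j
      (Finset.mem_univ j)
    rcases mul_eq_zero.mp hall with h | h
    · exact absurd h (ne_of_gt (hwpos j hjk))
    · exact h
  have stageB : ∀ u, J.jmul c u = u → ∀ t, J.jmul c t = 0 → ⟪L u, J.jmul t t⟫ = 0 := by
    intro u hu t ht
    have hrw : ⟪L u, J.jmul t t⟫ = ∑ i ∈ Finset.univ.filter (fun i : Fin n => (i : ℕ) < k),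
        ⟪L (J.jmul (f i) u), J.jmul t t⟫ := by
      conv_lhs => rw [dec1 u hu]
      rw [map_sum, sum_inner]
    rw [hrw]
    apply Finset.sum_eq_zero
    intro i hi
    have hik : (i : ℕ) < k := (Finset.mem_filter.mp hi).2
    have key : ∀ r : ℝ, 0 ≤ (-⟪L (J.jmul u u), J.jmul t t⟫)
        + r * (-(2 * ⟪L (J.jmul u (f i)), J.jmul t t⟫)) := by
      intro r
      have hyP1 : J.jmul c (u + r • f i) = u + r • f i := by
        rw [map_add, map_smul, hu, hcf1 i hik]
      have hq : ⟪L (J.jmul (u + r • f i) (u + r • f i)), J.jmul t t⟫ ≤ 0 :=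
        hZ _ (sqK _) _ (sqK t) (J.orth10 (hP1sq hyP1) (hP0sq ht))
      rw [J.sq_expand (idem_f i) u r, map_add, map_add, map_smul, map_smul,
        inner_add_left, inner_add_left, real_inner_smul_left, real_inner_smul_left,
        stageB0 t ht i hik, mul_zero, add_zero] at hq
      nlinarith [hq]
    have hC := real_affine_nonneg_slope key
    have hz : ⟪L (J.jmul u (f i)), J.jmul t t⟫ = 0 := by linarith
    rw [J.comm (f i) u]
    exact hz
  have part1 : ∀ u, J.jmul c u = u → ∀ v, J.jmul c v = 0 → ⟪L u, v⟫ = 0 := by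
    intro u hu v hv
    have polar : ∀ t₁, J.jmul c t₁ = 0 → ∀ t₂, J.jmul c t₂ = 0 →
        ⟪L u, J.jmul t₁ t₂⟫ = 0 := by
      intro t₁ h₁ t₂ h₂
      have hsum12 : J.jmul c (t₁ + t₂) = 0 := by rw [map_add, h₁, h₂, add_zero]
      have e12 := stageB u hu (t₁ + t₂) hsum12
      have e1 := stageB u hu t₁ h₁
      have e2 := stageB u hu t₂ h₂
      have hexp : J.jmul (t₁ + t₂) (t₁ + t₂)
          = J.jmul t₁ t₁ + (2:ℝ) • J.jmul t₁ t₂ + J.jmul t₂ t₂ := by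
        simp only [map_add, LinearMap.add_apply]
        rw [J.comm t₂ t₁]
        module
      rw [hexp, inner_add_right, inner_add_right, real_inner_smul_right, e1, e2] at e12
      linarith
    have hrw : ⟪L u, v⟫ = ∑ i ∈ Finset.univ.filter (fun i : Fin n => ¬ (i : ℕ) < k),
        ⟪L u, J.jmul (f i) v⟫ := by
      conv_lhs => rw [dec0 v hv]
      rw [inner_sum]
    rw [hrw]
    exact Finset.sum_eq_zero fun i hi =>
      polar (f i) (hcf0 i (le_of_not_gt (Finset.mem_filter.mp hi).2)) v hv
  refine ⟨part1, ?_⟩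
  have h1 : ⟪L xb, d⟫ = 0 := stageA d hcd
  have h2 : J.jmul d (L xb) = 0 := J.cone_idem_zero hLxb hdd h1
  have h3 := expandd (L xb)
  rw [h3] at h2
  exact (sub_eq_zero.mp h2).symm
end

section
/- Let K be a self-dual cone, e ∈ int K, and L a Z-transformation on K such that the game (L,e) has value zero and is completely mixed. Then: (a) L(x) ∈ K implies L(x) = 0; (b) L²(x) ∈ K implies L(x) = 0; and consequently ker(L²) = ker(L). -/
open scoped RealInnerProductSpace

variable {V : Type*}

/-- A self-dual cone in a real inner product space: a closed convex pointed cone with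
nonempty interior that coincides with its dual cone. -/
def SelfDualCone [NormedAddCommGroup V] [InnerProductSpace ℝ V] (K : Set V) : Prop :=
  IsClosed K ∧ Convex ℝ K ∧ (∀ x ∈ K, ∀ t : ℝ, 0 ≤ t → t • x ∈ K) ∧
    (∀ x, x ∈ K → -x ∈ K → x = 0) ∧ (interior K).Nonempty ∧
    (∀ x, x ∈ K ↔ ∀ y ∈ K, 0 ≤ ⟪x, y⟫)

/-- The strategy set `Δ(e) = {x ∈ K : ⟪x,e⟫ = 1}`. -/
def Strat [NormedAddCommGroup V] [InnerProductSpace ℝ V] (K : Set V) (e : V) : Set V :=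
  {x | x ∈ K ∧ ⟪x, e⟫ = 1}

/-- The minimax value of the zero-sum game `(L,e)`. -/
noncomputable def gameValue [NormedAddCommGroup V] [InnerProductSpace ℝ V]
    (K : Set V) (e : V) (L : V → V) : ℝ :=
  ⨆ x : Strat K e, ⨅ y : Strat K e, ⟪L x, (y : V)⟫

/-- `(xb, yb)` is an optimal strategy pair for the game `(L,e)`. -/
def OptPair [NormedAddCommGroup V] [InnerProductSpace ℝ V]
    (K : Set V) (e : V) (L : V → V) (xb yb : V) : Prop :=
  xb ∈ Strat K e ∧ yb ∈ Strat K e ∧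
    ∀ x ∈ Strat K e, ∀ y ∈ Strat K e,
      ⟪L x, yb⟫ ≤ ⟪L xb, yb⟫ ∧ ⟪L xb, yb⟫ ≤ ⟪L xb, y⟫

/-- The game `(L,e)` is completely mixed: every optimal strategy pair lies in the
interior of the cone. -/
def CompletelyMixed [NormedAddCommGroup V] [InnerProductSpace ℝ V]
    (K : Set V) (e : V) (L : V → V) : Prop :=
  ∀ xb yb, OptPair K e L xb yb → xb ∈ interior K ∧ yb ∈ interior K

/-- The cone order: `x ≤ y` iff `y - x ∈ K`. -/
def ConeLE (K : Set V) [AddCommGroup V] (x y : V) : Prop := y - x ∈ K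

section Aux
variable [NormedAddCommGroup V] [InnerProductSpace ℝ V]

lemma sdc_pair {K : Set V} (hK : SelfDualCone K) {x y : V} (hx : x ∈ K) (hy : y ∈ K) :
    0 ≤ ⟪x, y⟫ := (hK.2.2.2.2.2 x).mp hx y hy

lemma sdc_ball {K : Set V} (hK : SelfDualCone K) {u : V} {δ : ℝ} (hδ : 0 < δ)
    (hball : Metric.ball u δ ⊆ K) {x : V} (hx : x ∈ K) : δ / 2 * ‖x‖ ≤ ⟪u, x⟫ := by
  rcases eq_or_ne x 0 with rfl | hx0
  · simp
  · have hxn : 0 < ‖x‖ := norm_pos_iff.mpr hx0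
    set v : V := u - (δ / 2 / ‖x‖) • x with hv
    have hvK : v ∈ K := by
      apply hball
      have h1 : v - u = -((δ / 2 / ‖x‖) • x) := by rw [hv]; abel
      rw [Metric.mem_ball, dist_eq_norm, h1, norm_neg, norm_smul, Real.norm_eq_abs,
        abs_of_pos (by positivity : (0:ℝ) < δ / 2 / ‖x‖), div_mul_cancel₀ _ hxn.ne']
      linarith
    have h0 := sdc_pair hK hvK hx
    have hvx : ⟪v, x⟫ = ⟪u, x⟫ - δ / 2 * ‖x‖ := by
      rw [hv, inner_sub_left, real_inner_smul_left, real_inner_self_eq_norm_mul_norm]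
      field_simp
    rw [hvx] at h0
    linarith

lemma sdc_pos {K : Set V} (hK : SelfDualCone K) {u x : V} (hu : u ∈ interior K)
    (hx : x ∈ K) (hx0 : x ≠ 0) : 0 < ⟪u, x⟫ := by
  obtain ⟨δ, hδ, hball⟩ := Metric.mem_nhds_iff.mp (mem_interior_iff_mem_nhds.mp hu)
  have := sdc_ball hK hδ hball hx
  have hxn : 0 < ‖x‖ := norm_pos_iff.mpr hx0
  nlinarith

lemma sdc_interior_smul {K : Set V} (hK : SelfDualCone K) {t : ℝ} (ht : 0 < t) {a : V}
    (ha : a ∈ interior K) : t • a ∈ interior K := by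
  have hopen : IsOpen ((t • ·) '' interior K) := (isOpenMap_smul₀ ht.ne') _ isOpen_interior
  have hsub : (t • ·) '' interior K ⊆ K := by
    rintro _ ⟨b, hb, rfl⟩
    exact hK.2.2.1 b (interior_subset hb) t ht.le
  exact interior_maximal hsub hopen ⟨a, ha, rfl⟩

lemma sdc_sep [FiniteDimensional ℝ V] {K : Set V} (hK : SelfDualCone K) {A : Set V}
    (hA : Convex ℝ A) (hAne : A.Nonempty) (hdisj : ∀ a ∈ A, a ∉ interior K) :
    ∃ z, z ∈ K ∧ z ≠ 0 ∧ ∀ a ∈ A, ⟪z, a⟫ ≤ 0 := by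
  obtain ⟨f, u, hfu1, hfu2⟩ := geometric_hahn_banach_open (hK.2.1.interior) isOpen_interior hA
    (Set.disjoint_left.mpr fun a ha ha' => hdisj a ha' ha)
  obtain ⟨a₀, ha₀⟩ := hK.2.2.2.2.1
  have h1 : ∀ a ∈ interior K, f a ≤ 0 := by
    intro a ha
    by_contra hpos
    push_neg at hpos
    set t : ℝ := max 1 (u / f a + 1) with htdef
    have ht : 0 < t := lt_of_lt_of_le one_pos (le_max_left _ _)
    have hlt := hfu1 _ (sdc_interior_smul hK ht ha)
    rw [map_smul, smul_eq_mul] at hlt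
    have h2 : u / f a + 1 ≤ t := le_max_right _ _
    have h3 : (u / f a + 1) * f a ≤ t * f a := by nlinarith
    have h4 : (u / f a + 1) * f a = u + f a := by field_simp
    nlinarith
  have hu0 : 0 ≤ u := by
    by_contra hun
    push_neg at hun
    have hfa₀ : f a₀ < u := hfu1 _ ha₀
    have hfa₀n : f a₀ < 0 := lt_trans hfa₀ hun
    set t : ℝ := u / (2 * f a₀) with htdef
    have ht : 0 < t := div_pos_of_neg_of_neg hun (by linarith)
    have hlt := hfu1 _ (sdc_interior_smul hK ht ha₀)
    rw [map_smul, smul_eq_mul] at hlt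
    have hne : f a₀ ≠ 0 := ne_of_lt hfa₀n
    have h5 : t * f a₀ = u / 2 := by rw [htdef]; field_simp
    nlinarith
  have hKf : ∀ k ∈ K, f k ≤ 0 := by
    intro k hk
    by_contra hfk
    push_neg at hfk
    have hfa₀ : f a₀ ≤ 0 := h1 _ ha₀
    have hden : 0 < f k - f a₀ := by linarith
    set θ : ℝ := f k / (2 * (f k - f a₀)) with hθdef
    have hθpos : 0 < θ := by positivity
    have hθ1 : 0 ≤ 1 - θ := by
      rw [hθdef, sub_nonneg, div_le_one (by linarith)]
      linarith
    have hmem := hK.2.1.combo_interior_self_mem_interior ha₀ hk hθpos hθ1 (by ring)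
    have hle := h1 _ hmem
    rw [map_add, map_smul, map_smul, smul_eq_mul, smul_eq_mul] at hle
    have hkey : θ * (f k - f a₀) = f k / 2 := by rw [hθdef]; field_simp
    nlinarith
  set z : V := (InnerProductSpace.toDual ℝ V).symm (-f) with hz
  have hzval : ∀ x : V, ⟪z, x⟫ = -(f x) := by
    intro x
    rw [hz, InnerProductSpace.toDual_symm_apply]
    simp
  have hzK : z ∈ K := by
    rw [hK.2.2.2.2.2]
    intro y hy
    rw [hzval]
    linarith [hKf y hy]
  have hz0 : z ≠ 0 := by
    intro h0
    obtain ⟨b, hb⟩ := hAne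
    have h1' : f a₀ = 0 := by
      have := hzval a₀; rw [h0] at this; simpa using this.symm
    have h2' : f b = 0 := by
      have := hzval b; rw [h0] at this; simpa using this.symm
    have := hfu1 _ ha₀
    have := hfu2 _ hb
    rw [h1'] at *
    rw [h2'] at *
    linarith [hfu1 _ ha₀, hfu2 _ hb]
  refine ⟨z, hzK, hz0, fun a ha => ?_⟩
  rw [hzval]
  linarith [hfu2 _ ha]
end Aux

/-- for a Z-transformation `L` on a self-dual cone whose game `(L,e)` has
value zero and is completely mixed: (a) `L(x) ∈ K` implies `L(x) = 0`;
(b) `L²(x) ∈ K` implies `L(x) = 0`; consequently `ker(L²) = ker(L)`. -/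
theorem stmt18 [NormedAddCommGroup V] [InnerProductSpace ℝ V] [FiniteDimensional ℝ V]
    (K : Set V) (hK : SelfDualCone K) (e : V) (he : e ∈ interior K)
    (L : V →ₗ[ℝ] V) (hZ : IsZTransf K (⇑L))
    (hv : gameValue K e (⇑L) = 0) (hcm : CompletelyMixed K e (⇑L)) :
    (∀ x, L x ∈ K → L x = 0) ∧
      (∀ x, L (L x) ∈ K → L x = 0) ∧
      LinearMap.ker (L ∘ₗ L) = LinearMap.ker L := by
  rcases subsingleton_or_nontrivial V with hV | hV
  · exact ⟨fun x _ => Subsingleton.elim _ _, fun x _ => Subsingleton.elim _ _,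
      Subsingleton.elim _ _⟩
  -- basic setup
  have heK : e ∈ K := interior_subset he
  obtain ⟨δ, hδ, hball⟩ := Metric.mem_nhds_iff.mp (mem_interior_iff_mem_nhds.mp he)
  have h0K : (0 : V) ∈ K := by
    have := hK.2.2.1 e heK 0 le_rfl
    simpa using this
  have he0 : e ≠ 0 := by
    intro h0
    obtain ⟨v, hv0⟩ := exists_ne (0 : V)
    have hvn : 0 < ‖v‖ := norm_pos_iff.mpr hv0
    have hw : ∀ s : V, ‖s‖ < δ → s ∈ K := by
      intro s hs
      apply hball
      rw [Metric.mem_ball, dist_eq_norm, h0, sub_zero]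
      exact hs
    set w : V := (δ / 2 / ‖v‖) • v with hwdef
    have hwn : ‖w‖ < δ := by
      rw [hwdef, norm_smul, Real.norm_eq_abs,
        abs_of_pos (by positivity : (0:ℝ) < δ / 2 / ‖v‖), div_mul_cancel₀ _ hvn.ne']
      linarith
    have hwn' : ‖-w‖ < δ := by rwa [norm_neg]
    have := hK.2.2.2.1 w (hw w hwn) (hw (-w) hwn')
    rw [hwdef] at this
    have : v = 0 := by
      have hc : (δ / 2 / ‖v‖) ≠ 0 := by positivity
      exact (smul_eq_zero.mp this).resolve_left hc
    exact hv0 this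
  have hen : 0 < ‖e‖ := norm_pos_iff.mpr he0
  -- normalization
  have hnorm : ∀ x ∈ K, x ≠ 0 → 0 < ⟪x, e⟫ ∧ (⟪x, e⟫)⁻¹ • x ∈ Strat K e := by
    intro x hx hx0
    have hpos : 0 < ⟪x, e⟫ := by
      rw [real_inner_comm]; exact sdc_pos hK he hx hx0
    refine ⟨hpos, hK.2.2.1 x hx _ (inv_nonneg.mpr hpos.le), ?_⟩
    rw [real_inner_smul_left, inv_mul_cancel₀ hpos.ne']
  -- Strat is nonempty
  obtain ⟨hepos, hy₀⟩ := hnorm e heK he0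
  set y₀ : V := (⟪e, e⟫)⁻¹ • e with hy₀def
  have hStratne : (Strat K e).Nonempty := ⟨y₀, hy₀⟩
  haveI : Nonempty (Strat K e) := hStratne.to_subtype
  -- norm bounds on Strat
  have hub : ∀ x ∈ Strat K e, ‖x‖ ≤ 2 / δ := by
    intro x hx
    have h1 : δ / 2 * ‖x‖ ≤ ⟪e, x⟫ := sdc_ball hK hδ hball hx.1
    rw [real_inner_comm, hx.2] at h1
    rw [le_div_iff₀ hδ]
    nlinarith
  have hlb : ∀ x ∈ Strat K e, 1 / ‖e‖ ≤ ‖x‖ := by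
    intro x hx
    have h1 : ⟪x, e⟫ ≤ ‖x‖ * ‖e‖ := real_inner_le_norm x e
    rw [hx.2] at h1
    rw [div_le_iff₀ hen]
    linarith
  -- lower bound for inner products against fixed vector on Strat
  have hBddB : ∀ c : V, BddBelow (Set.range fun y : Strat K e => ⟪c, (y : V)⟫) := by
    intro c
    refine ⟨-(‖c‖ * (2 / δ)), ?_⟩
    rintro _ ⟨y, rfl⟩
    have h1 : |⟪c, (y : V)⟫| ≤ ‖c‖ * ‖(y : V)‖ := abs_real_inner_le_norm c y
    have h2 : ‖(y : V)‖ ≤ 2 / δ := hub _ y.2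
    have h3 : 0 ≤ ‖c‖ := norm_nonneg c
    have := abs_le.mp h1
    nlinarith
  have hBddA : BddAbove (Set.range fun x : Strat K e => ⨅ y : Strat K e, ⟪L x, (y : V)⟫) := by
    set Lc := LinearMap.toContinuousLinearMap L with hLc
    refine ⟨‖Lc‖ * (2 / δ) * (2 / δ), ?_⟩
    rintro _ ⟨x, rfl⟩
    have h1 : (⨅ y : Strat K e, ⟪L x, (y : V)⟫) ≤ ⟪L x, ((⟨y₀, hy₀⟩ : Strat K e) : V)⟫ :=
      ciInf_le (hBddB _) _
    refine le_trans h1 ?_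
    have h2 : ⟪L x, y₀⟫ ≤ ‖L (x : V)‖ * ‖y₀‖ := real_inner_le_norm _ _
    have h3 : ‖L (x : V)‖ ≤ ‖Lc‖ * ‖(x : V)‖ := by
      have := Lc.le_opNorm (x : V)
      simpa [hLc] using this
    have h4 : ‖(x : V)‖ ≤ 2 / δ := hub _ x.2
    have h5 : ‖y₀‖ ≤ 2 / δ := hub _ hy₀
    have h6 : 0 ≤ ‖Lc‖ := norm_nonneg _
    have h7 : 0 ≤ ‖y₀‖ := norm_nonneg _
    have h8 : 0 ≤ ‖L (x : V)‖ := norm_nonneg _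
    have h9 : (0:ℝ) ≤ 2 / δ := by positivity
    have h10 : ‖L (x : V)‖ ≤ ‖Lc‖ * (2 / δ) := le_trans h3 (by nlinarith)
    calc ⟪L (x : V), y₀⟫ ≤ ‖L (x : V)‖ * ‖y₀‖ := h2
      _ ≤ (‖Lc‖ * (2 / δ)) * (2 / δ) := mul_le_mul h10 h5 h7 (by positivity)
  -- no strategy maps into the interior
  have hA : ∀ x ∈ Strat K e, L x ∉ interior K := by
    intro x hx hin
    obtain ⟨δ', hδ', hball'⟩ := Metric.mem_nhds_iff.mp (mem_interior_iff_mem_nhds.mp hin)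
    set m : ℝ := δ' / 2 * (1 / ‖e‖) with hm
    have hmpos : 0 < m := by positivity
    have hlow : ∀ y : Strat K e, m ≤ ⟪L x, (y : V)⟫ := by
      intro y
      have h1 : δ' / 2 * ‖(y : V)‖ ≤ ⟪L x, (y : V)⟫ := sdc_ball hK hδ' hball' y.2.1
      have h2 : 1 / ‖e‖ ≤ ‖(y : V)‖ := hlb _ y.2
      nlinarith
    have h3 : m ≤ ⨅ y : Strat K e, ⟪L x, (y : V)⟫ := le_ciInf hlow
    have h4 : (⨅ y : Strat K e, ⟪L x, (y : V)⟫) ≤ gameValue K e (⇑L) :=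
      le_ciSup hBddA ⟨x, hx⟩
    rw [hv] at h4
    linarith
  have hB : ∀ y ∈ Strat K e, -(LinearMap.adjoint L y) ∉ interior K := by
    intro yh hyh hin
    obtain ⟨δ', hδ', hball'⟩ := Metric.mem_nhds_iff.mp (mem_interior_iff_mem_nhds.mp hin)
    set m : ℝ := δ' / 2 * (1 / ‖e‖) with hm
    have hmpos : 0 < m := by positivity
    have hup : ∀ x : Strat K e, ⟪L (x : V), yh⟫ ≤ -m := by
      intro x
      have h1 : δ' / 2 * ‖(x : V)‖ ≤ ⟪-(LinearMap.adjoint L yh), (x : V)⟫ :=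
        sdc_ball hK hδ' hball' x.2.1
      have h2 : 1 / ‖e‖ ≤ ‖(x : V)‖ := hlb _ x.2
      rw [inner_neg_left, LinearMap.adjoint_inner_left] at h1
      have h3 : ⟪yh, L (x : V)⟫ = ⟪L (x : V), yh⟫ := real_inner_comm _ _
      rw [h3] at h1
      nlinarith
    have h4 : ∀ x : Strat K e, (⨅ y : Strat K e, ⟪L (x : V), (y : V)⟫) ≤ -m := by
      intro x
      exact le_trans (ciInf_le (hBddB _) (⟨yh, hyh⟩ : Strat K e)) (hup x)
    have h5 : gameValue K e (⇑L) ≤ -m := ciSup_le h4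
    rw [hv] at h5
    linarith
  -- separation: construct optimal strategies
  have hStratconv : Convex ℝ (Strat K e) := by
    intro a ha b hb s t hs ht hst
    refine ⟨hK.2.1 ha.1 hb.1 hs ht hst, ?_⟩
    rw [inner_add_left, real_inner_smul_left, real_inner_smul_left, ha.2, hb.2]
    simpa using hst
  obtain ⟨zy, hzyK, hzy0, hzyA⟩ :=
    sdc_sep hK (hStratconv.linear_image L) (hStratne.image _)
      (by rintro _ ⟨x, hx, rfl⟩; exact hA x hx)
  obtain ⟨zx, hzxK, hzx0, hzxB⟩ :=
    sdc_sep hK (hStratconv.linear_image (-(LinearMap.adjoint L))) (hStratne.image _)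
      (by
        rintro _ ⟨y, hy, rfl⟩
        rw [LinearMap.neg_apply]
        exact hB y hy)
  -- normalized optimal strategies
  obtain ⟨hzyp, hybS⟩ := hnorm zy hzyK hzy0
  obtain ⟨hzxp, hxbS⟩ := hnorm zx hzxK hzx0
  set yb : V := (⟪zy, e⟫)⁻¹ • zy with hybdef
  set xb : V := (⟪zx, e⟫)⁻¹ • zx with hxbdef
  have hybineq : ∀ x ∈ Strat K e, ⟪L x, yb⟫ ≤ 0 := by
    intro x hx
    have h1 : ⟪zy, L x⟫ ≤ 0 := hzyA _ ⟨x, hx, rfl⟩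
    have h1' : ⟪L x, zy⟫ ≤ 0 := by rw [real_inner_comm]; exact h1
    rw [hybdef, real_inner_smul_right]
    have h2 := inv_nonneg.mpr hzyp.le
    nlinarith
  have hxbineq : ∀ y ∈ Strat K e, 0 ≤ ⟪L xb, y⟫ := by
    intro y hy
    have h1 : ⟪zx, -(LinearMap.adjoint L y)⟫ ≤ 0 := hzxB _ ⟨y, hy, by rw [LinearMap.neg_apply]⟩
    rw [inner_neg_right, real_inner_comm, LinearMap.adjoint_inner_left] at h1
    have h2 : 0 ≤ ⟪y, L zx⟫ := by linarith
    have h2' : 0 ≤ ⟪L zx, y⟫ := by rw [real_inner_comm]; exact h2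
    rw [hxbdef, map_smul, real_inner_smul_left]
    have h3 := inv_nonneg.mpr hzxp.le
    nlinarith
  have h00 : ⟪L xb, yb⟫ = 0 := le_antisymm (hybineq _ hxbS) (hxbineq _ hybS)
  have hopt : OptPair K e (⇑L) xb yb := by
    refine ⟨hxbS, hybS, fun x hx y hy => ⟨?_, ?_⟩⟩
    · rw [h00]; exact hybineq x hx
    · rw [h00]; exact hxbineq y hy
  obtain ⟨hxbi, hybi⟩ := hcm xb yb hopt
  -- extend inequalities to all of K
  have hybK : ∀ x ∈ K, ⟪L x, yb⟫ ≤ 0 := by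
    intro x hx
    rcases eq_or_ne x 0 with rfl | hx0
    · simp
    · obtain ⟨hc, hxS⟩ := hnorm x hx hx0
      have h1 := hybineq _ hxS
      rw [map_smul, real_inner_smul_left] at h1
      have h2 := inv_pos.mpr hc
      nlinarith
  have hxbK : ∀ y ∈ K, 0 ≤ ⟪L xb, y⟫ := by
    intro y hy
    rcases eq_or_ne y 0 with rfl | hy0
    · simp
    · obtain ⟨hc, hyS⟩ := hnorm y hy hy0
      have h1 := hxbineq _ hyS
      rw [real_inner_smul_right] at h1
      have h2 := inv_pos.mpr hc
      nlinarith
  -- L xb = 0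
  have hLxbK : L xb ∈ K := (hK.2.2.2.2.2 _).mpr (hxbK)
  have hLxb0 : L xb = 0 := by
    by_contra hne
    have := sdc_pos hK hybi hLxbK hne
    rw [real_inner_comm] at this
    rw [h00] at this
    exact lt_irrefl _ this
  -- adjoint L yb = 0
  have hadj : LinearMap.adjoint L yb = 0 := by
    have hnegK : -(LinearMap.adjoint L yb) ∈ K := by
      rw [hK.2.2.2.2.2]
      intro k hk
      rw [inner_neg_left, LinearMap.adjoint_inner_left]
      have := hybK k hk
      rw [real_inner_comm] at this
      linarith
    have hzero : ⟪xb, -(LinearMap.adjoint L yb)⟫ = 0 := by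
      rw [inner_neg_right, real_inner_comm, LinearMap.adjoint_inner_left, real_inner_comm, h00]
      ring
    by_contra hne
    have hne' : -(LinearMap.adjoint L yb) ≠ 0 := by simpa using hne
    have := sdc_pos hK hxbi hnegK hne'
    rw [hzero] at this
    exact lt_irrefl _ this
  have hinner0 : ∀ x : V, ⟪L x, yb⟫ = 0 := by
    intro x
    rw [real_inner_comm, ← LinearMap.adjoint_inner_left, hadj, inner_zero_left]
  -- part (a)
  have parta : ∀ x, L x ∈ K → L x = 0 := by
    intro x hx
    by_contra hne
    have := sdc_pos hK hybi hx hne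
    rw [real_inner_comm, hinner0] at this
    exact lt_irrefl _ this
  -- kernel elements of K are interior
  have hker : ∀ u ∈ K, u ≠ 0 → L u = 0 → u ∈ interior K := by
    intro u hu hu0 hLu
    obtain ⟨hc, huS⟩ := hnorm u hu hu0
    set u' : V := (⟪u, e⟫)⁻¹ • u with hu'def
    have hLu' : L u' = 0 := by rw [hu'def, map_smul, hLu, smul_zero]
    have hopt' : OptPair K e (⇑L) u' yb := by
      refine ⟨huS, hybS, fun x hx y hy => ⟨?_, ?_⟩⟩
      · rw [hinner0, hinner0]
      · rw [hLu']
        simp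
    have hui := (hcm u' yb hopt').1
    have : u = ⟪u, e⟫ • u' := by
      rw [hu'def, smul_smul, mul_inv_cancel₀ hc.ne', one_smul]
    rw [this]
    exact sdc_interior_smul hK hc hui
  -- part (b)
  have partb : ∀ x, L (L x) ∈ K → L x = 0 := by
    intro x hLLx
    have hLLx0 : L (L x) = 0 := parta _ hLLx
    set d : V := L x with hd
    have hdy : ⟪d, yb⟫ = 0 := hinner0 x
    by_contra hd0
    set S : Set ℝ := {t : ℝ | xb + t • d ∈ K} with hS
    have h0S : (0 : ℝ) ∈ S := by
      simp only [hS, Set.mem_setOf_eq, zero_smul, add_zero]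
      exact hxbS.1
    have hScl : IsClosed S := by
      have hcont : Continuous fun t : ℝ => xb + t • d :=
        continuous_const.add (continuous_id.smul continuous_const)
      exact hK.1.preimage hcont
    have hSbdd : BddAbove S := by
      by_contra hnb
      have hdK : d ∈ K := by
        rw [hK.2.2.2.2.2]
        intro k hk
        by_contra hneg
        push_neg at hneg
        have hp : ⟪d, k⟫ < 0 := lt_of_not_ge (by simpa using hneg)
        obtain ⟨t, htS, htgt⟩ := not_bddAbove_iff.mp hnb (⟪xb, k⟫ / (-⟪d, k⟫))
        have h1 : 0 ≤ ⟪xb + t • d, k⟫ := sdc_pair hK htS hk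
        rw [inner_add_left] at h1
        have h1s : ⟪t • d, k⟫ = t * ⟪d, k⟫ := real_inner_smul_left _ _ _
        rw [h1s] at h1
        have h2 : ⟪xb, k⟫ < t * (-⟪d, k⟫) := (div_lt_iff₀ (by linarith)).mp htgt
        nlinarith
      have := sdc_pos hK hybi hdK hd0
      rw [real_inner_comm, hdy] at this
      exact lt_irrefl _ this
    set tsup : ℝ := sSup S with htsup
    have htsupS : tsup ∈ S := hScl.csSup_mem ⟨0, h0S⟩ hSbdd
    set u : V := xb + tsup • d with hu
    have huK : u ∈ K := htsupS
    have hLu : L u = 0 := by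
      rw [hu, map_add, hLxb0, zero_add, map_smul, hd, hLLx0, smul_zero]
    have hu0 : u ≠ 0 := by
      intro h0
      have h1 : ⟪u, yb⟫ = ⟪xb, yb⟫ := by
        rw [hu, inner_add_left]
        have h1s : ⟪tsup • d, yb⟫ = tsup * ⟪d, yb⟫ := real_inner_smul_left _ _ _
        rw [h1s, hdy, mul_zero, add_zero]
      have hxb0 : xb ≠ 0 := by
        intro hxb0
        have := hxbS.2
        rw [hxb0] at this
        simp at this
      have h2 : 0 < ⟪yb, xb⟫ := sdc_pos hK hybi hxbS.1 hxb0
      rw [h0, inner_zero_left] at h1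
      rw [real_inner_comm] at h2
      linarith
    have hui : u ∈ interior K := hker u huK hu0 hLu
    -- push past the sup
    have hcont2 : Continuous fun s : ℝ => u + s • d :=
      continuous_const.add (continuous_id.smul continuous_const)
    have hpre : IsOpen ((fun s : ℝ => u + s • d) ⁻¹' interior K) :=
      isOpen_interior.preimage hcont2
    have h0pre : (0 : ℝ) ∈ (fun s : ℝ => u + s • d) ⁻¹' interior K := by
      simp only [Set.mem_preimage, zero_smul, add_zero]
      exact hui
    obtain ⟨ε, hε, hballε⟩ := Metric.isOpen_iff.mp hpre 0 h0pre
    have hmem : (ε / 2 : ℝ) ∈ (fun s : ℝ => u + s • d) ⁻¹' interior K := by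
      apply hballε
      rw [Metric.mem_ball, dist_zero_right, Real.norm_eq_abs, abs_of_pos (by linarith)]
      linarith
    have hSmem : tsup + ε / 2 ∈ S := by
      have : u + (ε / 2) • d = xb + (tsup + ε / 2) • d := by
        rw [hu, add_smul]; abel
      have h3 : u + (ε / 2) • d ∈ K := interior_subset hmem
      rw [this] at h3
      exact h3
    have := le_csSup hSbdd hSmem
    rw [← htsup] at this
    linarith
  refine ⟨parta, partb, ?_⟩
  ext x
  simp only [LinearMap.mem_ker, LinearMap.comp_apply]
  constructor
  · intro h
    exact partb x (h ▸ h0K)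
  · intro h
    rw [h, map_zero]
end
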